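/- For any simple graph G on [n], the binomial edge ideal J_G equals the intersection ∩_{S ⊆ [n]} P_S(G) over all subsets S of [n]; in particular J_G is a radical ideal. -/

import Mathlib

open MvPolynomial SimpleGraph Classical
open scoped BigOperators

noncomputable section BinomialEdgeIdeals

variable (K : Type*) [Field K]

/-- `f i j = x_i y_j - x_j y_i` in `S = K[x_v, y_v : v ∈ V]`, where
`x_v = X (Sum.inl v)` and `y_v = X (Sum.inr v)`. -/
def fij {V : Type*} (i j : V) : MvPolynomial (V ⊕ V) K :=
  X (Sum.inl i) * X (Sum.inr j) - X (Sum.inl j) * X (Sum.inr i)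

/-- The binomial edge ideal of a simple graph `G` on a linearly ordered vertex set. -/
def beIdeal {V : Type*} [LinearOrder V] (G : SimpleGraph V) :
    Ideal (MvPolynomial (V ⊕ V) K) :=
  Ideal.span { f | ∃ i j : V, i < j ∧ G.Adj i j ∧ f = fij K i j }

/-- Exponent vectors, compared lexicographically with
`x_1 > x_2 > ⋯ > x_n > y_1 > ⋯ > y_n`: the variable `x_i` is encoded as
`i - 1 ∈ Fin (n+n)` and `y_i` as `n + i - 1`, and a *smaller* code means a *bigger*
variable, so the `Finsupp.Lex` order (which compares at the smallest differing index)
is exactly the lexicographic monomial order induced by this order of the variables. -/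
def expLex {n : ℕ} (m : (Fin n ⊕ Fin n) →₀ ℕ) : Lex (Fin (n + n) →₀ ℕ) :=
  toLex (Finsupp.equivMapDomain finSumFinEquiv m)

/-- The leading exponent (largest exponent vector in the support, in the lexicographic
order `x_1 > ⋯ > x_n > y_1 > ⋯ > y_n`) of a polynomial; junk value `0` for `p = 0`. -/
def leadExp {n : ℕ} (p : MvPolynomial (Fin n ⊕ Fin n) K) : (Fin n ⊕ Fin n) →₀ ℕ :=
  Finsupp.equivMapDomain finSumFinEquiv.symm
    (ofLex (WithBot.unbotD (toLex 0) (p.support.image (fun m => expLex m)).max))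

/-- The initial ideal of `I` with respect to the lexicographic order induced by
`x_1 > ⋯ > x_n > y_1 > ⋯ > y_n`. -/
def initialIdeal {n : ℕ} (I : Ideal (MvPolynomial (Fin n ⊕ Fin n) K)) :
    Ideal (MvPolynomial (Fin n ⊕ Fin n) K) :=
  Ideal.span { q | ∃ p ∈ I, p ≠ 0 ∧ q = monomial (leadExp K p) (1 : K) }

/-- The graded maximal ideal, generated by all the variables. -/
def varIdeal (V : Type*) : Ideal (MvPolynomial (V ⊕ V) K) :=
  Ideal.span (Set.range X)

/-- `depth (S/I)`: the supremum of the lengths of regular sequences on `S/I`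
consisting of elements of the graded maximal ideal. -/
def quotDepth {V : Type*} (I : Ideal (MvPolynomial (V ⊕ V) K)) : ℕ :=
  sSup { k | ∃ rs : List (MvPolynomial (V ⊕ V) K), rs.length = k ∧
    (∀ r ∈ rs, r ∈ varIdeal K V) ∧
    RingTheory.Sequence.IsRegular (MvPolynomial (V ⊕ V) K ⧸ I) rs }

/-- `p` is homogeneous of degree `d ∈ ℤ` (the zero polynomial having every degree). -/
def IsHomogInt {σ : Type*} (p : MvPolynomial σ K) (d : ℤ) : Prop :=
  p = 0 ∨ ∃ m : ℕ, (m : ℤ) = d ∧ p.IsHomogeneous m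

/-- A graded free resolution of `S/I`: free modules `F i = ⊕_j S(-j)^{b i j}`
(with basis indexed by `Σ j : ℤ, Fin (b i j)`), degree-zero (i.e. twist-compatible
homogeneous) differentials, exact, augmented by a degree-zero surjection onto `S ⧸ I`. -/
structure GradedFreeResolution {σ : Type*} (I : Ideal (MvPolynomial σ K)) where
  b : ℕ → ℤ →₀ ℕ
  diff : ∀ i : ℕ, ((Σ j : ℤ, Fin (b (i + 1) j)) →₀ MvPolynomial σ K) →ₗ[MvPolynomial σ K]
      ((Σ j : ℤ, Fin (b i j)) →₀ MvPolynomial σ K)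
  aug : ((Σ j : ℤ, Fin (b 0 j)) →₀ MvPolynomial σ K) →ₗ[MvPolynomial σ K]
      (MvPolynomial σ K ⧸ I)
  homog : ∀ (i : ℕ) (j : ℤ) (k : Fin (b (i + 1) j)) (j' : ℤ) (k' : Fin (b i j')),
    IsHomogInt K ((diff i (Finsupp.single ⟨j, k⟩ 1)) ⟨j', k'⟩) (j - j')
  aug_homog : ∀ (j : ℤ) (k : Fin (b 0 j)), ∃ p : MvPolynomial σ K,
    IsHomogInt K p j ∧ aug (Finsupp.single ⟨j, k⟩ 1) = Ideal.Quotient.mk I p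
  aug_surj : Function.Surjective aug
  exact_zero : Function.Exact (diff 0) aug
  exact_succ : ∀ i : ℕ, Function.Exact (diff (i + 1)) (diff i)

/-- The Castelnuovo–Mumford regularity of `S/I`: the least `r` such that `S/I` admits a
graded free resolution with all `i`-th syzygies generated in degrees `≤ i + r` (the
minimal graded free resolution realizes this minimum). -/
def regQuot {σ : Type*} (I : Ideal (MvPolynomial σ K)) : ℤ :=
  sInf { r : ℤ | ∃ F : GradedFreeResolution K I, ∀ i j, F.b i j ≠ 0 → j ≤ i + r }

/- ### Graph-theoretic notions -/

/-- `s` is a maximal clique of `G`. -/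
def IsMaxClique {V : Type*} (G : SimpleGraph V) (s : Finset V) : Prop :=
  G.IsClique ↑s ∧ ∀ t : Finset V, G.IsClique ↑t → s ⊆ t → s = t

/-- A graph is chordal if it has no induced cycle of length `≥ 4`. -/
def Chordal {V : Type*} (G : SimpleGraph V) : Prop :=
  ∀ m : ℕ, 4 ≤ m → IsEmpty (cycleGraph m ↪g G)

/-- A block graph: a chordal graph in which any two distinct maximal cliques meet in at
most one vertex. -/
def IsBlockGraph {V : Type*} (G : SimpleGraph V) : Prop :=
  Chordal G ∧ ∀ s t : Finset V, IsMaxClique G s → IsMaxClique G t → s ≠ t →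
    (s ∩ t).card ≤ 1

/-- The conditions (i) and (ii) defining a `C_ℓ`-graph, for a given sequence of cliques
`F 0, …, F (ℓ-1)`: each `F i` is a maximal clique with at least `2` vertices, consecutive
cliques meet in exactly one vertex, non-consecutive cliques are disjoint, and every edge
of `G` either lies in some `F i` or is a pendant edge `{j, k}` attached at an
intersection point `j` of two consecutive cliques, with `k` of degree `1`. -/
def IsCliqueSeq {V : Type*} (G : SimpleGraph V) (ℓ : ℕ) (F : Fin ℓ → Finset V) : Prop :=
  (∀ i, IsMaxClique G (F i) ∧ 2 ≤ (F i).card) ∧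
  (∀ i : Fin ℓ, ∀ h : i.val + 1 < ℓ, (F i ∩ F ⟨i.val + 1, h⟩).card = 1) ∧
  (∀ i j : Fin ℓ, i < j → j.val ≠ i.val + 1 → F i ∩ F j = ∅) ∧
  (∀ e ∈ G.edgeSet, (∃ i, ∀ v ∈ e, v ∈ F i) ∨
    (∃ (jv kv : V) (i : Fin ℓ) (h : i.val + 1 < ℓ), e = s(jv, kv) ∧
      jv ∈ F i ∩ F ⟨i.val + 1, h⟩ ∧ (G.neighborSet kv).ncard = 1))

/-- A `C_ℓ`-graph. -/
def IsCLGraph {V : Type*} (G : SimpleGraph V) (ℓ : ℕ) : Prop :=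
  G.Connected ∧ ∃ F : Fin ℓ → Finset V, IsCliqueSeq G ℓ F

/-- `G` has an induced path of length `k` (an induced subgraph isomorphic to the path
graph with `k` edges). -/
def HasInducedPathLen {V : Type*} (G : SimpleGraph V) (k : ℕ) : Prop :=
  Nonempty (pathGraph (k + 1) ↪g G)

/-- The longest induced path of `G` has length `ℓ`. -/
def LongestInducedPathLen {V : Type*} (G : SimpleGraph V) (ℓ : ℕ) : Prop :=
  HasInducedPathLen G ℓ ∧ ∀ k, HasInducedPathLen G k → k ≤ ℓ

/-- The longest path of `G` has length `ℓ`. -/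
def LongestPathLen {V : Type*} (G : SimpleGraph V) (ℓ : ℕ) : Prop :=
  (∃ (u v : V) (p : G.Walk u v), p.IsPath ∧ p.length = ℓ) ∧
  ∀ (u v : V) (p : G.Walk u v), p.IsPath → p.length ≤ ℓ

/-- A caterpillar tree: a tree containing a path `P` such that every vertex is a vertex
of `P` or adjacent to a vertex of `P`. -/
def IsCaterpillar {V : Type*} (T : SimpleGraph V) : Prop :=
  T.IsTree ∧ ∃ (u v : V) (p : T.Walk u v), p.IsPath ∧
    ∀ w : V, w ∈ p.support ∨ ∃ z ∈ p.support, T.Adj w z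

/-- The spider tree on `ℓ + 3` vertices: a path `0 — 1 — ⋯ — ℓ` together with a path
`k — (ℓ+1) — (ℓ+2)` of length 2 attached at the vertex `k`. -/
def spider (ℓ k : ℕ) : SimpleGraph (Fin (ℓ + 3)) :=
  SimpleGraph.fromRel (fun a b =>
    (a.val + 1 = b.val ∧ b.val ≤ ℓ) ∨ (a.val = k ∧ b.val = ℓ + 1) ∨
    (a.val = ℓ + 1 ∧ b.val = ℓ + 2))

/-- The graph obtained from `G` by deleting the vertices in `T` (keeping the ambient
vertex set: the vertices of `T` simply become isolated). -/
def delVerts {V : Type*} (G : SimpleGraph V) (T : Set V) : SimpleGraph V where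
  Adj a b := G.Adj a b ∧ a ∉ T ∧ b ∉ T
  symm := ⟨fun a b h => ⟨h.1.symm, h.2.2, h.2.1⟩⟩
  loopless := ⟨fun a h => G.loopless.irrefl a h.1⟩

/-- The prime ideal `P_T(G)`: generated by `x_i, y_i` for `i ∈ T`, together with the
binomial edge ideals of the complete graphs on the connected components of the
restriction of `G` to the complement of `T`. -/
def cutPrime {V : Type*} [LinearOrder V] (G : SimpleGraph V) (T : Set V) :
    Ideal (MvPolynomial (V ⊕ V) K) :=
  Ideal.span ({ q | ∃ i ∈ T, q = X (Sum.inl i) ∨ q = X (Sum.inr i) } ∪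
    { q | ∃ i j : V, i < j ∧ i ∉ T ∧ j ∉ T ∧ (delVerts G T).Reachable i j ∧
      q = fij K i j })

/-- `c(T)`: the number of connected components of the restriction of `G` to the
complement of `T`. -/
def numComp {V : Type*} (G : SimpleGraph V) (T : Set V) : ℕ :=
  Nat.card ((G.induce Tᶜ).ConnectedComponent)

/-- `F 0, …, F (r-1)` is a leaf order on the maximal cliques of `G`: it enumerates them
without repetition, and each `F k` with `k > 0` is a leaf of the simplicial complex
generated by `F 0, …, F k`, i.e. admits a branch `F b`, `b < k`. -/
def IsLeafOrder {V : Type*} (G : SimpleGraph V) (r : ℕ) (F : Fin r → Finset V) : Prop :=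
  Function.Injective F ∧ (Set.range F = { s | IsMaxClique G s }) ∧
  ∀ k : Fin r, 0 < k.val → ∃ b : Fin r, b < k ∧
    ∀ m : Fin r, m < k → F m ∩ F k ⊆ F b ∩ F k

/-- An admissible path from `i` to `j` (`i < j`) in `G`: a path (recorded as its list of
vertices) with pairwise distinct vertices, whose interior vertices `v` all satisfy
`v < i` or `v > j`, and which is minimal: no proper subsequence with the same endpoints
is again a path of `G`. -/
def IsAdmissiblePath {n : ℕ} (G : SimpleGraph (Fin n)) (i j : Fin n)
    (π : List (Fin n)) : Prop :=
  i < j ∧ π.Chain' G.Adj ∧ π.head? = some i ∧ π.getLast? = some j ∧ π.Nodup ∧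
  (∀ v ∈ π, v ≠ i → v ≠ j → (v < i ∨ j < v)) ∧
  ∀ π' : List (Fin n), π' ≠ π → π'.Sublist π → π'.head? = some i →
    π'.getLast? = some j → ¬ π'.Chain' G.Adj

/-- `u_π = (∏_{v ∈ π, v > j} x_v) (∏_{v ∈ π, v < i} y_v)` for a path `π` from `i` to `j`. -/
def uPath {n : ℕ} (i j : Fin n) (π : List (Fin n)) : MvPolynomial (Fin n ⊕ Fin n) K :=
  ((π.filter (fun v => j < v)).map (fun v => X (Sum.inl v))).prod *
  ((π.filter (fun v => v < i)).map (fun v => X (Sum.inr v))).prod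

/-- `Γ` is the reduced Gröbner basis of `I` with respect to the lexicographic order
`x_1 > ⋯ > x_n > y_1 > ⋯ > y_n`: `Γ ⊆ I`, all elements are monic, the leading monomials
of `Γ` generate the initial ideal of `I`, and no monomial of an element of `Γ` is
divisible by the leading monomial of another element. -/
def IsReducedGB {n : ℕ} (Γ : Set (MvPolynomial (Fin n ⊕ Fin n) K))
    (I : Ideal (MvPolynomial (Fin n ⊕ Fin n) K)) : Prop :=
  Γ ⊆ (I : Set (MvPolynomial (Fin n ⊕ Fin n) K)) ∧
  (∀ g ∈ Γ, g ≠ 0 ∧ MvPolynomial.coeff (leadExp K g) g = 1) ∧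
  initialIdeal K I = Ideal.span ((fun g => (monomial (leadExp K g) (1 : K))) '' Γ) ∧
  ∀ g ∈ Γ, ∀ g' ∈ Γ, g' ≠ g → ∀ m ∈ g.support, ¬ leadExp K g' ≤ m

end BinomialEdgeIdeals

/-!
Induction on the number of non-adjacent pairs of non-isolated vertices, following Ohtani.

If every neighbourhood in `G` is a clique, `G` is a disjoint union of complete graphs. Then
`J_G = P_∅(G)`, and `J_G` is prime: it is the kernel of the monomial map
`x_i ↦ s_C t_i, y_i ↦ u_C t_i` (`C` the component of `i`), because two monomials with the same
image are connected by swaps `x_j y_i ↦ x_i y_j` along edges, each a multiple of `f_ij`.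

Otherwise let `v` have two non-adjacent neighbours and let `G_v` be `G` with the neighbourhood
of `v` completed to a clique. The linear syzygy `x_v f_ij = x_i f_vj - x_j f_vi` gives
`J_G = J_{G_v} ∩ ((x_v, y_v) + J_{G-v})`, and both `G_v` and `G - v` are smaller. The second
ideal is the preimage of `J_{G-v}` under `x_v, y_v ↦ 0`, which maps `P_{T ∪ {v}}(G)` into
`P_T(G - v)`; and `⋂_T P_T(G) ⊆ J_{G_v}` because `P_T(G) = P_T(G_v)` for `v ∉ T`, while for
`v ∈ T` we have `P_{T - v}(G) = P_{T - v}(G_v) ⊆ P_T(G_v)`, `v` being simplicial in `G_v`.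
Radicality passes to preimages and intersections.
-/

noncomputable section

namespace Finsupp

theorem exists_eq_add_single_add_single {σ : Type*} {m : σ →₀ ℕ} {a b : σ}
    (hab : a ≠ b) (ha : m a ≠ 0) (hb : m b ≠ 0) :
    ∃ m₀, m = m₀ + (single a 1 + single b 1) := by
  have hle : single a 1 + single b 1 ≤ m := fun s => by
    simp only [coe_add, Pi.add_apply, single_apply]
    split_ifs <;> subst_vars <;> first | omega | exact (hab rfl).elim
  obtain ⟨m₀, hm₀⟩ := exists_add_of_le hle
  exact ⟨m₀, hm₀.trans (add_comm _ _)⟩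

theorem le_mapDomain_apply {α β M : Type*} [AddCommMonoid M] [PartialOrder M]
    [CanonicallyOrderedAdd M] (f : α → β) (m : α →₀ M) (a : α) :
    m a ≤ mapDomain f m (f a) := by
  rw [← single_add_erase a m, mapDomain_add, mapDomain_single]
  simp

end Finsupp

namespace MvPolynomial

variable {R : Type*} [CommRing R] {σ τ : Type*}

variable (R) in
def monomialMap (ψ : (σ →₀ ℕ) →+ (τ →₀ ℕ)) : MvPolynomial σ R →ₐ[R] MvPolynomial τ R :=
  AddMonoidAlgebra.mapDomainAlgHom R R ψ

theorem monomialMap_monomial (ψ : (σ →₀ ℕ) →+ (τ →₀ ℕ)) (m : σ →₀ ℕ) (c : R) :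
    monomialMap R ψ (monomial m c) = monomial (ψ m) c := by
  simp [MvPolynomial, monomialMap, monomial]

theorem ker_monomialMap_le {ψ : (σ →₀ ℕ) →+ (τ →₀ ℕ)} {I : Ideal (MvPolynomial σ R)}
    (hI : ∀ m m', ψ m = ψ m' → monomial m 1 - monomial m' 1 ∈ I) :
    RingHom.ker (monomialMap R ψ) ≤ I := by
  intro f hf
  -- `L` picks a monomial in each fibre of `ψ`; by `hI`, `L ∘ monomialMap R ψ` is the quotient map.
  let L : MvPolynomial τ R →ₗ[R] MvPolynomial σ R ⧸ I := (basisMonomials τ R).constr R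
    fun d => Ideal.Quotient.mk I (monomial (Function.invFun ψ d) 1)
  have hL : L ∘ₗ (monomialMap R ψ).toLinearMap = (Ideal.Quotient.mkₐ R I).toLinearMap := by
    refine (basisMonomials σ R).ext fun m => ?_
    have hψm : L (monomial (ψ m) 1) =
        Ideal.Quotient.mk I (monomial (Function.invFun ψ (ψ m)) 1) := by
      simpa using (basisMonomials τ R).constr_basis R _ (ψ m)
    simp only [coe_basisMonomials, LinearMap.coe_comp, Function.comp_apply,
      AlgHom.toLinearMap_apply, monomialMap_monomial, hψm, Ideal.Quotient.mkₐ_eq_mk]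
    exact (Ideal.Quotient.mk_eq_mk_iff_sub_mem _ _).2 (hI _ _ (Function.invFun_eq ⟨m, rfl⟩))
  simpa [RingHom.mem_ker.1 hf, Ideal.Quotient.eq_zero_iff_mem] using (LinearMap.congr_fun hL f).symm

variable (R) in
def killVars (A : Set σ) : MvPolynomial σ R →ₐ[R] MvPolynomial σ R :=
  aeval fun s => if s ∈ A then 0 else X s

variable {A : Set σ}

theorem killVars_X_of_mem {s : σ} (hs : s ∈ A) : killVars R A (X s) = 0 := by
  simp [killVars, hs]

theorem killVars_X_of_notMem {s : σ} (hs : s ∉ A) : killVars R A (X s) = X s := by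
  simp [killVars, hs]

theorem sub_killVars_mem (f : MvPolynomial σ R) :
    f - killVars R A f ∈ Ideal.span (X '' A) := by
  induction f using MvPolynomial.induction_on with
  | C a => simp [killVars]
  | add p q hp hq => simpa [add_sub_add_comm] using add_mem hp hq
  | mul_X p s hp =>
    have hs : X s - killVars R A (X s) ∈ Ideal.span (X '' A) := by
      by_cases h : s ∈ A
      · simpa [killVars_X_of_mem h] using Ideal.subset_span (Set.mem_image_of_mem X h)
      · simp [killVars_X_of_notMem h]
    have key : p * X s - killVars R A (p * X s)
        = (p - killVars R A p) * X s + killVars R A p * (X s - killVars R A (X s)) := by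
      rw [map_mul]; ring
    rw [key]
    exact add_mem (Ideal.mul_mem_right _ _ hp) (Ideal.mul_mem_left _ _ hs)

theorem killVars_eq_zero_of_mem {f : MvPolynomial σ R} (hf : f ∈ Ideal.span (X '' A)) :
    killVars R A f = 0 := by
  suffices Ideal.span (X '' A) ≤ RingHom.ker (killVars R A) from this hf
  rw [Ideal.span_le]
  rintro _ ⟨s, hs, rfl⟩
  exact killVars_X_of_mem hs

theorem span_X_image_sup_eq_comap_killVars {I : Ideal (MvPolynomial σ R)}
    (hI : ∀ f ∈ I, killVars R A f ∈ I) :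
    Ideal.span (X '' A) ⊔ I = I.comap (killVars R A) := by
  ext f
  refine ⟨fun hf => ?_, fun hf => ?_⟩
  · obtain ⟨a, ha, b, hb, rfl⟩ := Submodule.mem_sup.1 hf
    simpa [Ideal.mem_comap, killVars_eq_zero_of_mem ha] using hI b hb
  · rw [← sub_add_cancel f (killVars R A f)]
    exact Submodule.add_mem_sup (sub_killVars_mem f) hf

theorem mem_span_X_image_mul_span {s : Set (MvPolynomial σ R)}
    (hs : ∀ p ∈ s, killVars R A p = p) {g : MvPolynomial σ R}
    (hg : g ∈ Ideal.span s) (hgA : g ∈ Ideal.span (X '' A)) :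
    g ∈ Ideal.span (X '' A) * Ideal.span s := by
  suffices g - killVars R A g ∈ Ideal.span (X '' A) * Ideal.span s by
    simpa [killVars_eq_zero_of_mem hgA] using this
  clear hgA
  induction hg using Submodule.span_induction with
  | mem p hp => simp [hs p hp]
  | zero => simp
  | add p q _ _ hp hq => simpa [add_sub_add_comm] using add_mem hp hq
  | smul r p hp' hp =>
    have key : r • p - killVars R A (r • p)
        = (r - killVars R A r) * p + killVars R A r * (p - killVars R A p) := by
      rw [smul_eq_mul, map_mul]; ring
    rw [key]
    exact add_mem (Ideal.mul_mem_mul (sub_killVars_mem r) hp') (Ideal.mul_mem_left _ _ hp)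

end MvPolynomial

section Graph

variable {V : Type*} {G : SimpleGraph V} {T U : Set V} {v i j : V}

@[simp]
theorem delVerts_adj {a b : V} : (delVerts G T).Adj a b ↔ G.Adj a b ∧ a ∉ T ∧ b ∉ T := Iff.rfl

theorem delVerts_le (G : SimpleGraph V) (T : Set V) : delVerts G T ≤ G := fun _ _ h => h.1

@[simp]
theorem delVerts_empty (G : SimpleGraph V) : delVerts G ∅ = G := by
  ext; simp

theorem delVerts_delVerts (G : SimpleGraph V) (A B : Set V) :
    delVerts (delVerts G A) B = delVerts G (A ∪ B) := by
  ext; simp only [delVerts_adj, Set.mem_union]; tauto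

theorem SimpleGraph.Reachable.delVerts_insert (hv : G.IsClique (G.neighborSet v))
    (h : (delVerts G U).Reachable i j) (hi : i ≠ v) (hj : j ≠ v) :
    (delVerts G (insert v U)).Reachable i j := by
  rw [reachable_iff_reflTransGen] at h
  suffices (j ≠ v ∧ (delVerts G (insert v U)).Reachable i j) ∨
      (j = v ∧ ∃ a, (delVerts G (insert v U)).Reachable i a ∧ (delVerts G U).Adj a v) from
    (this.resolve_right fun h => hj h.1).2
  clear hj
  induction h with
  | refl => exact Or.inl ⟨hi, Reachable.refl _⟩
  | @tail k l _ hkl ih =>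
    have hlv : l ≠ v → l ∉ insert v U := fun hlv => by simp [hlv, hkl.2.2]
    rcases ih with ⟨hkv, hik⟩ | ⟨rfl, a, hia, hav⟩
    · by_cases hlv' : l = v
      · exact Or.inr ⟨hlv', k, hik, hlv' ▸ hkl⟩
      · refine Or.inl ⟨hlv', hik.trans (Adj.reachable ⟨hkl.1, ?_, hlv hlv'⟩)⟩
        simp [hkv, hkl.2.1]
    · have hlv' : l ≠ k := hkl.ne.symm
      refine Or.inl ⟨hlv', ?_⟩
      by_cases hal : a = l
      · exact hal ▸ hia
      · have ha : a ∉ insert k U := by simp [hav.ne, hav.2.1]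
        exact hia.trans (Adj.reachable ⟨hv hav.1.symm hkl.1 hal, ha, hlv hlv'⟩)

theorem SimpleGraph.Reachable.adj_of_forall_isClique (hG : ∀ v, G.IsClique (G.neighborSet v))
    (h : G.Reachable i j) (hij : i ≠ j) : G.Adj i j := by
  rw [reachable_iff_reflTransGen] at h
  induction h with
  | refl => exact absurd rfl hij
  | @tail k l _ hkl ih =>
    by_cases hik : i = k
    · exact hik ▸ hkl
    · exact hG k (ih hik).symm hkl hij

def SimpleGraph.completeNbhd (G : SimpleGraph V) (v : V) : SimpleGraph V :=
  G ⊔ fromRel fun a b => G.Adj v a ∧ G.Adj v b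

theorem SimpleGraph.completeNbhd_adj {a b : V} :
    (G.completeNbhd v).Adj a b ↔ G.Adj a b ∨ (a ≠ b ∧ G.Adj v a ∧ G.Adj v b) := by
  simp only [completeNbhd, sup_adj, fromRel_adj]
  tauto

theorem SimpleGraph.le_completeNbhd : G ≤ G.completeNbhd v := le_sup_left

theorem SimpleGraph.completeNbhd_adj_self {a : V} : (G.completeNbhd v).Adj v a ↔ G.Adj v a := by
  rw [completeNbhd_adj]
  exact ⟨fun h => h.elim id fun h => absurd h.2.1 (G.loopless.irrefl v), Or.inl⟩

theorem SimpleGraph.isClique_neighborSet_completeNbhd :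
    (G.completeNbhd v).IsClique ((G.completeNbhd v).neighborSet v) := by
  intro a ha b hb hab
  rw [mem_neighborSet, completeNbhd_adj_self] at ha hb
  exact completeNbhd_adj.2 (Or.inr ⟨hab, ha, hb⟩)

theorem SimpleGraph.Reachable.of_forall_adj {H : SimpleGraph V}
    (hGH : ∀ a b, G.Adj a b → H.Reachable a b) (h : G.Reachable i j) : H.Reachable i j := by
  rw [reachable_iff_reflTransGen] at h ⊢
  exact Relation.reflTransGen_closed (fun a b hab => (reachable_iff_reflTransGen a b).1
    (hGH a b hab)) _ _ h

theorem SimpleGraph.reachable_delVerts_completeNbhd_iff (hv : v ∉ T) :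
    (delVerts (G.completeNbhd v) T).Reachable i j ↔ (delVerts G T).Reachable i j := by
  refine ⟨Reachable.of_forall_adj fun a b ⟨hab, ha, hb⟩ => ?_,
    Reachable.mono fun _ _ hab => ⟨le_completeNbhd hab.1, hab.2⟩⟩
  rcases completeNbhd_adj.1 hab with hab | ⟨-, hva, hvb⟩
  · exact Adj.reachable (G := delVerts G T) ⟨hab, ha, hb⟩
  · exact (Adj.reachable (G := delVerts G T) ⟨hva.symm, ha, hv⟩).trans
      (Adj.reachable ⟨hvb, hv, hb⟩)

/-- Diagonal pairs are included so that isolating a vertex strictly shrinks this set. -/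
def SimpleGraph.nonAdjPairs (G : SimpleGraph V) : Set (V × V) :=
  {p | p.1 ∈ G.support ∧ p.2 ∈ G.support ∧ ¬ G.Adj p.1 p.2}

theorem SimpleGraph.support_completeNbhd : (G.completeNbhd v).support = G.support := by
  refine Set.Subset.antisymm (fun a ⟨w, haw⟩ => ?_) (support_mono le_completeNbhd)
  rcases completeNbhd_adj.1 haw with haw | ⟨-, hva, -⟩
  exacts [⟨w, haw⟩, ⟨v, hva.symm⟩]

theorem SimpleGraph.nonAdjPairs_completeNbhd_ssubset {a b : V} (ha : G.Adj v a)
    (hb : G.Adj v b) (hab : a ≠ b) (hnab : ¬ G.Adj a b) :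
    (G.completeNbhd v).nonAdjPairs ⊂ G.nonAdjPairs := by
  refine (Set.ssubset_iff_of_subset ?_).2 ⟨(a, b), ⟨⟨v, ha.symm⟩, ⟨v, hb.symm⟩, hnab⟩,
    fun h => h.2.2 (completeNbhd_adj.2 (Or.inr ⟨hab, ha, hb⟩))⟩
  rintro p ⟨h1, h2, h3⟩
  rw [support_completeNbhd] at h1 h2
  exact ⟨h1, h2, fun h => h3 (le_completeNbhd h)⟩

theorem SimpleGraph.nonAdjPairs_delVerts_ssubset (hv : v ∈ G.support) :
    (delVerts G {v}).nonAdjPairs ⊂ G.nonAdjPairs := by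
  have hsupp : ∀ a ∈ (delVerts G {v}).support, a ∈ G.support ∧ a ≠ v :=
    fun a ⟨w, haw⟩ => ⟨⟨w, haw.1⟩, haw.2.1⟩
  refine (Set.ssubset_iff_of_subset ?_).2
    ⟨(v, v), ⟨hv, hv, G.loopless.irrefl v⟩, fun h => (hsupp _ h.1).2 rfl⟩
  rintro p ⟨h1, h2, h3⟩
  exact ⟨(hsupp _ h1).1, (hsupp _ h2).1, fun h => h3 ⟨h, (hsupp _ h1).2, (hsupp _ h2).2⟩⟩

end Graph

section BinomialEdgeIdeal

variable {K : Type*} [Field K] {V : Type*} {v i j : V}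

theorem fij_swap (i j : V) : fij K j i = -fij K i j := by
  unfold fij; ring

theorem fij_mem_of_X_mem {I : Ideal (MvPolynomial (V ⊕ V) K)} (hx : X (Sum.inl i) ∈ I)
    (hy : X (Sum.inr i) ∈ I) (j : V) : fij K i j ∈ I ∧ fij K j i ∈ I := by
  have h : fij K i j ∈ I := sub_mem (I.mul_mem_right _ hx) (I.mul_mem_left _ hy)
  exact ⟨h, by rw [fij_swap]; exact neg_mem h⟩

def vertexVars (v : V) : Set (V ⊕ V) := {Sum.inl v, Sum.inr v}

@[simp]
theorem mem_vertexVars {s : V ⊕ V} : s ∈ vertexVars v ↔ s = Sum.inl v ∨ s = Sum.inr v := Iff.rfl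

theorem X_mem_span_vertexVars {s : V ⊕ V} (hs : s ∈ vertexVars v) :
    X s ∈ Ideal.span (X '' vertexVars v : Set (MvPolynomial (V ⊕ V) K)) :=
  Ideal.subset_span (Set.mem_image_of_mem X hs)

theorem fij_mem_span_vertexVars_left (j : V) :
    fij K v j ∈ Ideal.span (X '' vertexVars v) :=
  (fij_mem_of_X_mem (X_mem_span_vertexVars (by simp)) (X_mem_span_vertexVars (by simp)) j).1

theorem fij_mem_span_vertexVars_right (i : V) :
    fij K i v ∈ Ideal.span (X '' vertexVars v) :=
  (fij_mem_of_X_mem (X_mem_span_vertexVars (by simp)) (X_mem_span_vertexVars (by simp)) i).2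

theorem killVars_fij (hi : i ≠ v) (hj : j ≠ v) :
    killVars K (vertexVars v) (fij K i j) = fij K i j := by
  simp only [fij, map_sub, map_mul]
  rw [killVars_X_of_notMem (by simp [hi]), killVars_X_of_notMem (by simp [hj]),
    killVars_X_of_notMem (by simp [hj]), killVars_X_of_notMem (by simp [hi])]

section LinearOrder

variable [LinearOrder V] {G : SimpleGraph V} {T : Set V}

theorem fij_mem_beIdeal (h : G.Adj i j) : fij K i j ∈ beIdeal K G := by
  rcases lt_or_gt_of_ne h.ne with hij | hji
  · exact Ideal.subset_span ⟨i, j, hij, h, rfl⟩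
  · rw [fij_swap]
    exact neg_mem (Ideal.subset_span ⟨j, i, hji, h.symm, rfl⟩)

theorem beIdeal_mono {G' : SimpleGraph V} (h : G ≤ G') : beIdeal K G ≤ beIdeal K G' :=
  Ideal.span_mono fun _ ⟨i, j, hij, hadj, hf⟩ => ⟨i, j, hij, h hadj, hf⟩

theorem X_inl_mem_cutPrime (hi : i ∈ T) : X (Sum.inl i) ∈ cutPrime K G T :=
  Ideal.subset_span (Or.inl ⟨i, hi, Or.inl rfl⟩)

theorem X_inr_mem_cutPrime (hi : i ∈ T) : X (Sum.inr i) ∈ cutPrime K G T :=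
  Ideal.subset_span (Or.inl ⟨i, hi, Or.inr rfl⟩)

theorem fij_mem_cutPrime (hi : i ∉ T) (hj : j ∉ T) (h : (delVerts G T).Reachable i j) :
    fij K i j ∈ cutPrime K G T := by
  rcases lt_trichotomy i j with hij | rfl | hji
  · exact Ideal.subset_span (Or.inr ⟨i, j, hij, hi, hj, h, rfl⟩)
  · simp [fij]
  · rw [fij_swap]
    exact neg_mem (Ideal.subset_span (Or.inr ⟨j, i, hji, hj, hi, h.symm, rfl⟩))

theorem beIdeal_le_cutPrime (G : SimpleGraph V) (T : Set V) :
    beIdeal K G ≤ cutPrime K G T := by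
  rw [beIdeal, Ideal.span_le]
  rintro _ ⟨i, j, -, hadj, rfl⟩
  by_cases hi : i ∈ T
  · exact (fij_mem_of_X_mem (X_inl_mem_cutPrime hi) (X_inr_mem_cutPrime hi) j).1
  by_cases hj : j ∈ T
  · exact (fij_mem_of_X_mem (X_inl_mem_cutPrime hj) (X_inr_mem_cutPrime hj) i).2
  exact fij_mem_cutPrime hi hj (Adj.reachable ⟨hadj, hi, hj⟩)

theorem cutPrime_congr {G' : SimpleGraph V}
    (h : ∀ i j, (delVerts G T).Reachable i j ↔ (delVerts G' T).Reachable i j) :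
    cutPrime K G T = cutPrime K G' T := by
  simp only [cutPrime, h]

theorem cutPrime_diff_singleton_le (hv : G.IsClique (G.neighborSet v)) (hvT : v ∈ T) :
    cutPrime K G (T \ {v}) ≤ cutPrime K G T := by
  rw [cutPrime, Ideal.span_le]
  rintro _ (⟨i, hi, rfl | rfl⟩ | ⟨i, j, -, hiT, hjT, hij, rfl⟩)
  · exact X_inl_mem_cutPrime hi.1
  · exact X_inr_mem_cutPrime hi.1
  have hx := fij_mem_of_X_mem (X_inl_mem_cutPrime (K := K) (G := G) hvT) (X_inr_mem_cutPrime hvT)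
  by_cases hi : i = v
  · exact hi ▸ (hx j).1
  by_cases hj : j = v
  · exact hj ▸ (hx i).2
  have hT : insert v (T \ {v}) = T := by simpa using hvT
  refine fij_mem_cutPrime (fun h => hiT ⟨h, hi⟩) (fun h => hjT ⟨h, hj⟩) ?_
  simpa [hT] using hij.delVerts_insert hv hi hj

theorem killVars_mem_cutPrime_delVerts {f : MvPolynomial (V ⊕ V) K}
    (hf : f ∈ cutPrime K G (insert v T)) :
    killVars K (vertexVars v) f ∈ cutPrime K (delVerts G {v}) T := by
  suffices cutPrime K G (insert v T) ≤
      (cutPrime K (delVerts G {v}) T).comap (killVars K (vertexVars v)) from this hf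
  rw [cutPrime, Ideal.span_le]
  rintro _ (⟨i, hi, hX⟩ | ⟨i, j, -, hiT, hjT, hij, rfl⟩) <;>
    rw [SetLike.mem_coe, Ideal.mem_comap]
  · by_cases hiv : i = v
    · subst hiv
      rcases hX with rfl | rfl <;> simp [killVars_X_of_mem]
    · have hiT := hi.resolve_left hiv
      rcases hX with rfl | rfl <;> rw [killVars_X_of_notMem (by simp [hiv])]
      exacts [X_inl_mem_cutPrime hiT, X_inr_mem_cutPrime hiT]
  · rw [Set.mem_insert_iff, not_or] at hiT hjT
    rw [killVars_fij hiT.1 hjT.1]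
    refine fij_mem_cutPrime hiT.2 hjT.2 ?_
    rwa [delVerts_delVerts, Set.singleton_union]

theorem cutPrime_empty_le (hG : ∀ i j, G.Reachable i j → i ≠ j → G.Adj i j) :
    cutPrime K G ∅ ≤ beIdeal K G := by
  rw [cutPrime, Ideal.span_le]
  rintro _ (⟨i, hi, -⟩ | ⟨i, j, hij, -, -, hreach, rfl⟩)
  · exact absurd hi (Set.notMem_empty i)
  · rw [delVerts_empty] at hreach
    exact fij_mem_beIdeal (hG i j hreach hij.ne)

theorem X_mul_fij_mem_beIdeal (hi : G.Adj v i) (hj : G.Adj v j) {s : V ⊕ V}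
    (hs : s ∈ vertexVars v) : X s * fij K i j ∈ beIdeal K G := by
  obtain ⟨x, hx, rfl⟩ : ∃ x : V → V ⊕ V, (x = Sum.inl ∨ x = Sum.inr) ∧ s = x v := by
    rcases hs with rfl | rfl
    exacts [⟨_, Or.inl rfl, rfl⟩, ⟨_, Or.inr rfl, rfl⟩]
  have hsyz : X (x v) * fij K i j = X (x i) * fij K v j - X (x j) * fij K v i := by
    rcases hx with rfl | rfl <;> (unfold fij; ring)
  rw [hsyz]
  exact sub_mem (Ideal.mul_mem_left _ _ (fij_mem_beIdeal hj))
    (Ideal.mul_mem_left _ _ (fij_mem_beIdeal hi))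

theorem span_vertexVars_mul_beIdeal_completeNbhd_le :
    Ideal.span (X '' vertexVars v) * beIdeal K (G.completeNbhd v) ≤ beIdeal K G := by
  rw [beIdeal, Ideal.span_mul_span, Ideal.span_le]
  rintro _ ⟨_, ⟨s, hs, rfl⟩, _, ⟨i, j, -, hij, rfl⟩, rfl⟩
  rcases completeNbhd_adj.1 hij with hij | ⟨-, hi, hj⟩
  · exact Ideal.mul_mem_left _ _ (fij_mem_beIdeal hij)
  · exact X_mul_fij_mem_beIdeal hi hj hs

theorem beIdeal_le_span_vertexVars_sup_beIdeal_delVerts (G : SimpleGraph V) (v : V) :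
    beIdeal K G ≤ Ideal.span (X '' vertexVars v) ⊔ beIdeal K (delVerts G {v}) := by
  rw [beIdeal, Ideal.span_le]
  rintro _ ⟨i, j, hij, hadj, rfl⟩
  by_cases hi : i = v
  · exact Submodule.mem_sup_left (hi ▸ fij_mem_span_vertexVars_left j)
  by_cases hj : j = v
  · exact Submodule.mem_sup_left (hj ▸ fij_mem_span_vertexVars_right i)
  exact Submodule.mem_sup_right (Ideal.subset_span ⟨i, j, hij, ⟨hadj, hi, hj⟩, rfl⟩)

theorem beIdeal_completeNbhd_le :
    beIdeal K (G.completeNbhd v) ≤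
      beIdeal K (delVerts (G.completeNbhd v) {v}) ⊔
        (beIdeal K G ⊓ Ideal.span (X '' vertexVars v)) := by
  rw [beIdeal, Ideal.span_le]
  rintro _ ⟨i, j, hij, hadj, rfl⟩
  by_cases hi : i = v
  · subst hi
    exact Submodule.mem_sup_right
      ⟨fij_mem_beIdeal (completeNbhd_adj_self.1 hadj), fij_mem_span_vertexVars_left j⟩
  by_cases hj : j = v
  · subst hj
    exact Submodule.mem_sup_right
      ⟨fij_mem_beIdeal (completeNbhd_adj_self.1 hadj.symm).symm, fij_mem_span_vertexVars_right i⟩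
  exact Submodule.mem_sup_left (Ideal.subset_span ⟨i, j, hij, ⟨hadj, hi, hj⟩, rfl⟩)

theorem beIdeal_eq_inf (G : SimpleGraph V) (v : V) :
    beIdeal K G = beIdeal K (G.completeNbhd v) ⊓
      (Ideal.span (X '' vertexVars v) ⊔ beIdeal K (delVerts G {v})) := by
  refine le_antisymm (le_inf (beIdeal_mono le_completeNbhd)
    (beIdeal_le_span_vertexVars_sup_beIdeal_delVerts G v)) ?_
  rintro f ⟨hf, hf'⟩
  obtain ⟨a, ha, b, hb, rfl⟩ := Submodule.mem_sup.1 hf'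
  have hbG : b ∈ beIdeal K G := beIdeal_mono (delVerts_le G {v}) hb
  have haG' : a ∈ beIdeal K (G.completeNbhd v) := by
    simpa using sub_mem hf (beIdeal_mono le_completeNbhd hbG)
  obtain ⟨w, hw, h, ⟨hhG, hhv⟩, rfl⟩ := Submodule.mem_sup.1 (beIdeal_completeNbhd_le haG')
  have hwv : w ∈ Ideal.span (X '' vertexVars v) := by simpa using sub_mem ha hhv
  have hwG : w ∈ beIdeal K G := span_vertexVars_mul_beIdeal_completeNbhd_le <|
    Ideal.mul_mono_right (beIdeal_mono (delVerts_le _ _)) <|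
      mem_span_X_image_mul_span (by
        rintro _ ⟨i, j, -, hij, rfl⟩
        exact killVars_fij hij.2.1 hij.2.2) hw hwv
  exact add_mem (add_mem hwG hhG) hbG

end LinearOrder

end BinomialEdgeIdeal

section DisjointUnionOfCliques

open Finsupp

variable {K : Type*} [Field K] {V : Type*} (G : SimpleGraph V) {i j : V}

/- In the target of the monomial map `x_i ↦ s_C t_i`, `y_i ↦ u_C t_i` (`C` the component of `i`),
`s_C`, `u_C` and `t_i` are the variables `inl (inl C)`, `inl (inr C)` and `inr i`. -/
def clusterVarComp : V ⊕ V → (G.ConnectedComponent ⊕ G.ConnectedComponent) ⊕ V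
  | .inl i => .inl (.inl (G.connectedComponentMk i))
  | .inr i => .inl (.inr (G.connectedComponentMk i))

def clusterVarVertex : V ⊕ V → (G.ConnectedComponent ⊕ G.ConnectedComponent) ⊕ V
  | .inl i => .inr i
  | .inr i => .inr i

def clusterExp :
    ((V ⊕ V) →₀ ℕ) →+ (((G.ConnectedComponent ⊕ G.ConnectedComponent) ⊕ V) →₀ ℕ) :=
  mapDomain.addMonoidHom (clusterVarComp G) + mapDomain.addMonoidHom (clusterVarVertex G)

variable {G}

theorem clusterExp_apply (m : (V ⊕ V) →₀ ℕ) :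
    clusterExp G m = mapDomain (clusterVarComp G) m + mapDomain (clusterVarVertex G) m := rfl

theorem le_clusterExp_comp (m : (V ⊕ V) →₀ ℕ) (s : V ⊕ V) :
    m s ≤ clusterExp G m (clusterVarComp G s) :=
  (le_mapDomain_apply (clusterVarComp G) m s).trans (by simp [clusterExp_apply])

theorem le_clusterExp_vertex (m : (V ⊕ V) →₀ ℕ) (s : V ⊕ V) :
    m s ≤ clusterExp G m (clusterVarVertex G s) :=
  (le_mapDomain_apply (clusterVarVertex G) m s).trans (by simp [clusterExp_apply])

theorem exists_of_clusterExp_apply_ne_zero {m : (V ⊕ V) →₀ ℕ} {t} (ht : clusterExp G m t ≠ 0) :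
    ∃ s, m s ≠ 0 ∧ (clusterVarComp G s = t ∨ clusterVarVertex G s = t) := by
  classical
  rw [clusterExp_apply, Finsupp.coe_add, Pi.add_apply, ne_eq, Nat.add_eq_zero_iff, not_and_or] at ht
  rcases ht with ht | ht <;>
  · obtain ⟨s, hs, rfl⟩ := Finset.mem_image.1 (mapDomain_support (mem_support_iff.2 ht))
    exact ⟨s, mem_support_iff.1 hs, by simp⟩

theorem clusterExp_swap (m₀ : (V ⊕ V) →₀ ℕ) (hij : G.Reachable i j) :
    clusterExp G (m₀ + (single (Sum.inl i) 1 + single (Sum.inr j) 1)) =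
      clusterExp G (m₀ + (single (Sum.inl j) 1 + single (Sum.inr i) 1)) := by
  have hc : G.connectedComponentMk i = G.connectedComponentMk j := ConnectedComponent.eq.2 hij
  simp only [map_add, clusterExp_apply, mapDomain_single, clusterVarComp, clusterVarVertex, hc]
  abel

theorem fij_eq_monomial_sub (i j : V) :
    fij K i j = monomial (single (Sum.inl i) 1 + single (Sum.inr j) 1) 1 -
      monomial (single (Sum.inl j) 1 + single (Sum.inr i) 1) 1 := by
  simp only [fij, X, monomial_mul, one_mul]

theorem monomial_add_sub_monomial_add (m₀ : (V ⊕ V) →₀ ℕ) (i j : V) :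
    monomial (m₀ + (single (Sum.inl i) 1 + single (Sum.inr j) 1)) (1 : K) -
      monomial (m₀ + (single (Sum.inl j) 1 + single (Sum.inr i) 1)) 1 =
        monomial m₀ 1 * fij K i j := by
  rw [fij_eq_monomial_sub, mul_sub, monomial_mul, monomial_mul, one_mul]

variable [LinearOrder V]

theorem exists_clusterExp_eq_of_apply_ne_zero (hG : ∀ i j, G.Reachable i j → i ≠ j → G.Adj i j)
    {m m' : (V ⊕ V) →₀ ℕ} (h : clusterExp G m = clusterExp G m') {s : V ⊕ V} (hs : m s ≠ 0) :
    ∃ m'', clusterExp G m'' = clusterExp G m' ∧ m'' s ≠ 0 ∧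
      monomial m'' (1 : K) - monomial m' 1 ∈ beIdeal K G := by
  by_cases hs' : m' s ≠ 0
  · exact ⟨m', rfl, hs', by simp⟩
  -- For `s = x_i`, `m'` must contain `y_i` and some `x_j` with `j ~ i`: trade `x_j y_i` for
  -- `x_i y_j`, which changes the monomial by a multiple of `f_ij`. Symmetrically for `s = y_i`.
  rw [not_not] at hs'
  have hvert : clusterExp G m' (clusterVarVertex G s) ≠ 0 :=
    h ▸ (Nat.pos_of_ne_zero hs).trans_le (le_clusterExp_vertex m s) |>.ne'
  have hcomp : clusterExp G m' (clusterVarComp G s) ≠ 0 :=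
    h ▸ (Nat.pos_of_ne_zero hs).trans_le (le_clusterExp_comp m s) |>.ne'
  obtain ⟨t, ht, ht'⟩ := exists_of_clusterExp_apply_ne_zero hvert
  obtain ⟨u, hu, hu'⟩ := exists_of_clusterExp_apply_ne_zero hcomp
  rcases s with i | i
  · obtain ⟨j, hj, hij⟩ : ∃ j, m' (.inl j) ≠ 0 ∧ G.Reachable i j := by
      rcases u with j | j <;> simp [clusterVarComp, clusterVarVertex] at hu'
      exact ⟨j, hu, hu'.symm⟩
    have hyi : m' (.inr i) ≠ 0 := by
      rcases t with a | a <;> simp [clusterVarComp, clusterVarVertex] at ht' <;> subst ht'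
      exacts [absurd hs' ht, ht]
    have hji : j ≠ i := by rintro rfl; exact hj hs'
    obtain ⟨m₀, rfl⟩ := exists_eq_add_single_add_single (by simp) hj hyi
    refine ⟨m₀ + (single (.inl i) 1 + single (.inr j) 1), ?_, ?_, ?_⟩
    · exact clusterExp_swap m₀ hij
    · simp
    rw [monomial_add_sub_monomial_add]
    exact Ideal.mul_mem_left _ _ (fij_mem_beIdeal (hG i j hij hji.symm))
  · obtain ⟨j, hj, hij⟩ : ∃ j, m' (.inr j) ≠ 0 ∧ G.Reachable i j := by
      rcases u with j | j <;> simp [clusterVarComp, clusterVarVertex] at hu'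
      exact ⟨j, hu, hu'.symm⟩
    have hxi : m' (.inl i) ≠ 0 := by
      rcases t with a | a <;> simp [clusterVarComp, clusterVarVertex] at ht' <;> subst ht'
      exacts [ht, absurd hs' ht]
    have hji : j ≠ i := by rintro rfl; exact hj hs'
    obtain ⟨m₀, rfl⟩ := exists_eq_add_single_add_single (by simp) hxi hj
    refine ⟨m₀ + (single (.inl j) 1 + single (.inr i) 1), ?_, ?_, ?_⟩
    · exact (clusterExp_swap m₀ hij).symm
    · simp
    rw [← neg_sub, monomial_add_sub_monomial_add]
    exact neg_mem (Ideal.mul_mem_left _ _ (fij_mem_beIdeal (hG i j hij hji.symm)))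

theorem monomial_sub_monomial_mem_beIdeal (hG : ∀ i j, G.Reachable i j → i ≠ j → G.Adj i j)
    {m m' : (V ⊕ V) →₀ ℕ} (h : clusterExp G m = clusterExp G m') :
    monomial m (1 : K) - monomial m' 1 ∈ beIdeal K G := by
  induction m using WellFoundedLT.induction generalizing m' with | _ m ih =>
  obtain rfl | ⟨s, hs⟩ := (eq_or_ne m 0).imp_right Finsupp.ne_iff.1
  · obtain rfl : m' = 0 := by
      ext s
      simpa [← h] using le_clusterExp_vertex (G := G) m' s
    simp
  obtain ⟨m'', h'', hs'', hmem⟩ := exists_clusterExp_eq_of_apply_ne_zero (K := K) hG h hs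
  obtain ⟨m₁, rfl⟩ := exists_add_of_le (single_le_iff.2 (Nat.one_le_iff_ne_zero.2 hs))
  obtain ⟨m₁'', rfl⟩ := exists_add_of_le (single_le_iff.2 (Nat.one_le_iff_ne_zero.2 hs''))
  have hm₁ : monomial m₁ (1 : K) - monomial m₁'' 1 ∈ beIdeal K G :=
    ih m₁ (lt_add_of_pos_left _ (pos_iff_ne_zero.2 (single_ne_zero.2 one_ne_zero)))
      (by simpa using h.trans h''.symm)
  rw [← sub_add_sub_cancel _ (monomial (single s 1 + m₁'') 1)]
  refine add_mem ?_ hmem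
  rw [← one_mul (1 : K), ← monomial_mul, ← monomial_mul, ← mul_sub]
  exact Ideal.mul_mem_left _ _ hm₁

theorem beIdeal_eq_ker_monomialMap_clusterExp
    (hG : ∀ i j, G.Reachable i j → i ≠ j → G.Adj i j) :
    beIdeal K G = RingHom.ker (monomialMap K (clusterExp G)) := by
  refine le_antisymm ?_ (ker_monomialMap_le fun m m' h => monomial_sub_monomial_mem_beIdeal hG h)
  rw [beIdeal, Ideal.span_le]
  rintro _ ⟨i, j, -, hij, rfl⟩
  rw [SetLike.mem_coe, RingHom.mem_ker, fij_eq_monomial_sub, map_sub, monomialMap_monomial,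
    monomialMap_monomial, sub_eq_zero]
  simpa using congrArg (monomial · (1 : K)) (clusterExp_swap 0 hij.reachable)

theorem isPrime_beIdeal (hG : ∀ i j, G.Reachable i j → i ≠ j → G.Adj i j) :
    (beIdeal K G).IsPrime :=
  beIdeal_eq_ker_monomialMap_clusterExp (K := K) hG ▸ RingHom.ker_isPrime _

end DisjointUnionOfCliques

section Induction

variable {K : Type*} [Field K] {V : Type*} [LinearOrder V] {G : SimpleGraph V} {v : V}

theorem killVars_mem_beIdeal_delVerts {f : MvPolynomial (V ⊕ V) K}
    (hf : f ∈ beIdeal K (delVerts G {v})) :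
    killVars K (vertexVars v) f ∈ beIdeal K (delVerts G {v}) := by
  suffices beIdeal K (delVerts G {v}) ≤
      (beIdeal K (delVerts G {v})).comap (killVars K (vertexVars v)) from this hf
  rw [beIdeal, Ideal.span_le]
  rintro _ ⟨i, j, hij, hadj, rfl⟩
  rw [SetLike.mem_coe, Ideal.mem_comap, killVars_fij hadj.2.1 hadj.2.2]
  exact Ideal.subset_span ⟨i, j, hij, hadj, rfl⟩

theorem iInf_cutPrime_le_beIdeal_completeNbhd
    (h : beIdeal K (G.completeNbhd v) = ⨅ T, cutPrime K (G.completeNbhd v) T) :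
    ⨅ T, cutPrime K G T ≤ beIdeal K (G.completeNbhd v) := by
  rw [h]
  refine le_iInf fun T => ?_
  by_cases hvT : v ∈ T
  · calc ⨅ T, cutPrime K G T ≤ cutPrime K G (T \ {v}) := iInf_le _ _
      _ = cutPrime K (G.completeNbhd v) (T \ {v}) :=
        cutPrime_congr fun _ _ => (reachable_delVerts_completeNbhd_iff (by simp)).symm
      _ ≤ cutPrime K (G.completeNbhd v) T :=
        cutPrime_diff_singleton_le isClique_neighborSet_completeNbhd hvT
  · exact (iInf_le _ T).trans
      (cutPrime_congr fun _ _ => (reachable_delVerts_completeNbhd_iff hvT).symm).le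

theorem span_vertexVars_sup_beIdeal_delVerts_eq_comap :
    Ideal.span (X '' vertexVars v) ⊔ beIdeal K (delVerts G {v}) =
      (beIdeal K (delVerts G {v})).comap (killVars K (vertexVars v)) :=
  span_X_image_sup_eq_comap_killVars fun _ => killVars_mem_beIdeal_delVerts

theorem iInf_cutPrime_le_span_vertexVars_sup_beIdeal_delVerts
    (h : beIdeal K (delVerts G {v}) = ⨅ T, cutPrime K (delVerts G {v}) T) :
    ⨅ T, cutPrime K G T ≤ Ideal.span (X '' vertexVars v) ⊔ beIdeal K (delVerts G {v}) := by
  rw [span_vertexVars_sup_beIdeal_delVerts_eq_comap, h]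
  intro f hf
  simp only [Ideal.mem_comap, Submodule.mem_iInf] at hf ⊢
  exact fun T => killVars_mem_cutPrime_delVerts (hf (insert v T))

theorem beIdeal_eq_iInf_cutPrime_and_isRadical_of_forall_isClique
    (hG : ∀ v, G.IsClique (G.neighborSet v)) :
    beIdeal K G = (⨅ T, cutPrime K G T) ∧ (beIdeal K G).IsRadical := by
  have hG' : ∀ i j, G.Reachable i j → i ≠ j → G.Adj i j := fun _ _ h => h.adj_of_forall_isClique hG
  exact ⟨le_antisymm (le_iInf (beIdeal_le_cutPrime G))
    ((iInf_le _ ∅).trans (cutPrime_empty_le hG')), (isPrime_beIdeal hG').isRadical⟩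

theorem beIdeal_eq_iInf_cutPrime_and_isRadical_of_completeNbhd_of_delVerts
    (h₁ : beIdeal K (G.completeNbhd v) = (⨅ T, cutPrime K (G.completeNbhd v) T) ∧
      (beIdeal K (G.completeNbhd v)).IsRadical)
    (h₂ : beIdeal K (delVerts G {v}) = (⨅ T, cutPrime K (delVerts G {v}) T) ∧
      (beIdeal K (delVerts G {v})).IsRadical) :
    beIdeal K G = (⨅ T, cutPrime K G T) ∧ (beIdeal K G).IsRadical := by
  refine ⟨le_antisymm (le_iInf (beIdeal_le_cutPrime G)) ?_, ?_⟩ <;> rw [beIdeal_eq_inf G v]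
  · exact le_inf (iInf_cutPrime_le_beIdeal_completeNbhd h₁.1)
      (iInf_cutPrime_le_span_vertexVars_sup_beIdeal_delVerts h₂.1)
  · rw [span_vertexVars_sup_beIdeal_delVerts_eq_comap]
    exact h₁.2.inf (h₂.2.comap _)

theorem beIdeal_eq_iInf_cutPrime_and_isRadical [Finite V] (G : SimpleGraph V) :
    beIdeal K G = (⨅ T, cutPrime K G T) ∧ (beIdeal K G).IsRadical := by
  by_cases hG : ∀ v, G.IsClique (G.neighborSet v)
  · exact beIdeal_eq_iInf_cutPrime_and_isRadical_of_forall_isClique hG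
  obtain ⟨v, hv⟩ := not_forall.1 hG
  obtain ⟨a, ha, b, hb, hab, hnab⟩ : ∃ a, G.Adj v a ∧ ∃ b, G.Adj v b ∧ a ≠ b ∧ ¬ G.Adj a b := by
    simpa [IsClique, Set.Pairwise] using hv
  exact beIdeal_eq_iInf_cutPrime_and_isRadical_of_completeNbhd_of_delVerts
    (beIdeal_eq_iInf_cutPrime_and_isRadical (G.completeNbhd v))
    (beIdeal_eq_iInf_cutPrime_and_isRadical (delVerts G {v}))
termination_by G.nonAdjPairs.ncard
decreasing_by
  · exact Set.ncard_lt_ncard (nonAdjPairs_completeNbhd_ssubset ha hb hab hnab) (Set.toFinite _)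
  · exact Set.ncard_lt_ncard (nonAdjPairs_delVerts_ssubset ⟨a, ha⟩) (Set.toFinite _)

end Induction

end

/-- `J_G = ⋂_{T ⊆ [n]} P_T(G)`; in particular `J_G` is radical. -/
theorem stmt11 (K : Type*) [Field K] (n : ℕ) (G : SimpleGraph (Fin n)) :
    beIdeal K G = (⨅ T : Set (Fin n), cutPrime K G T) ∧ (beIdeal K G).IsRadical :=
  beIdeal_eq_iInf_cutPrime_and_isRadical G
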